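/- arXiv:1910.08296 — 5 statements merged into one kernel-verified Lean document; each statement's English description precedes it below -/
import Mathlib

section
/- (Lemma 3) Fix real constants B > 0, γ̄₀ > 0, λ̂ ≥ 0, η ≥ 0, P_u > 0 and δ > 0. Consider minimizing F(E, t) = E − λ̂·t·B·log₂(1 + γ̄₀·E/t) + η·t over the feasible set {(E, t) : 0 ≤ E ≤ t·P_u, 0 ≤ t ≤ δ}, with the convention F(0, 0) = 0. Let p* = min(max(λ̂·B/ln 2 − 1/γ̄₀, 0), P_u) and g = p* − λ̂·B·log₂(1 + γ̄₀·p*) + η. Then: (i) if g < 0, the point (E, t) = (δ·p*, δ) is a global minimizer, with minimum value δ·g; (ii) if g > 0, the point (0, 0) is a global minimizer, with minimum value 0; (iii) if g = 0, then for every t ∈ [0, δ] the point (p*·t, t) is a global minimizer, with minimum value 0. -/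
/-!
For `t > 0` the objective is the perspective `F(E, t) = t · (φ(E/t) + η)` of the convex function
`φ(p) = p − c·log(1 + γ̄₀·p)`, `c = λ̂·B / ln 2`, and `φ` is minimized on `[0, P_u]` at the projection
`p*` of its stationary point `c − 1/γ̄₀` onto `[0, P_u]`. Hence `F(E, t) ≥ t·g` on the feasible set,
with equality along the ray `E = p*·t`, and it remains to minimize the linear function `t ↦ t·g`
over `[0, δ]`.
-/

open Real Set

/-- The clamp `min (max a lo) hi` is the projection of `a` onto `[lo, hi]`. -/
lemma sub_min_max_mul_sub_nonneg {a lo hi p : ℝ} (hp : p ∈ Icc lo hi) :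
    0 ≤ (p - min (max a lo) hi) * (min (max a lo) hi - a) := by
  obtain ⟨hlo, hhi⟩ := hp
  rcases le_total a lo with ha | ha
  · rw [max_eq_right ha, min_eq_left (hlo.trans hhi)]
    nlinarith
  rcases le_total a hi with hb | hb
  · rw [max_eq_left ha, min_eq_left hb, sub_self, mul_zero]
  · rw [max_eq_left ha, min_eq_right hb]
    nlinarith

lemma log_sub_log_le_div {x y : ℝ} (hx : 0 < x) (hy : 0 < y) :
    log y - log x ≤ (y - x) / x := by
  have h := log_le_sub_one_of_pos (div_pos hy hx)
  rwa [log_div hy.ne' hx.ne', ← div_self hx.ne', ← sub_div] at h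

/-- First-order optimality: `(p - q) · (q - (c - 1/γ))` is `(p - q)` times `φ'(q)` up to a
positive factor, for the convex `φ(p) = p - c log (1 + γ p)`. -/
lemma sub_mul_log_one_add_mul_le {c γ p q : ℝ} (hc : 0 ≤ c) (hγ : 0 < γ) (hp : 0 ≤ p)
    (hq : 0 ≤ q) (hopt : 0 ≤ (p - q) * (q - (c - 1 / γ))) :
    q - c * log (1 + γ * q) ≤ p - c * log (1 + γ * p) := by
  have hq1 : 0 < 1 + γ * q := by positivity
  have hp1 : 0 < 1 + γ * p := by positivity
  have hlin : c * (γ * (p - q)) ≤ (p - q) * (1 + γ * q) := by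
    have h : (p - q) * (1 + γ * q) - c * (γ * (p - q)) = γ * ((p - q) * (q - (c - 1 / γ))) := by
      field_simp
      ring
    nlinarith [mul_nonneg hγ.le hopt]
  have hlog : c * (log (1 + γ * p) - log (1 + γ * q)) ≤ p - q :=
    calc c * (log (1 + γ * p) - log (1 + γ * q))
        ≤ c * ((1 + γ * p - (1 + γ * q)) / (1 + γ * q)) :=
          mul_le_mul_of_nonneg_left (log_sub_log_le_div hq1 hp1) hc
      _ = c * (γ * (p - q)) / (1 + γ * q) := by ring
      _ ≤ p - q := by rwa [div_le_iff₀ hq1]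
  linarith

lemma mul_logb_two_eq (lam B x : ℝ) : lam * (B * logb 2 x) = lam * B / log 2 * log x := by
  rw [logb]
  ring

/-- The objective of subproblem (L1); at `t = 0` it is `E`, since `E / 0 = 0`. -/
noncomputable def offloadCost (lam B γ η E t : ℝ) : ℝ :=
  E - lam * (t * (B * logb 2 (1 + γ * E / t))) + η * t

section offloadCost

variable {lam B γ η : ℝ}

lemma offloadCost_mul_self (p t : ℝ) :
    offloadCost lam B γ η (p * t) t = t * (p - lam * (B * logb 2 (1 + γ * p)) + η) := by
  rcases eq_or_ne t 0 with rfl | ht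
  · simp [offloadCost]
  · rw [offloadCost, mul_div_assoc, mul_div_cancel_right₀ p ht]
    ring

lemma mul_le_offloadCost {P q E t : ℝ}
    (hmin : ∀ p ∈ Icc 0 P,
      q - lam * (B * logb 2 (1 + γ * q)) ≤ p - lam * (B * logb 2 (1 + γ * p)))
    (hE : 0 ≤ E) (hEP : E ≤ t * P) (ht : 0 ≤ t) :
    t * (q - lam * (B * logb 2 (1 + γ * q)) + η) ≤ offloadCost lam B γ η E t := by
  rcases ht.eq_or_lt with rfl | ht
  · simp [offloadCost, le_antisymm (by simpa using hEP) hE]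
  · have hEt : E / t ∈ Icc 0 P := ⟨div_nonneg hE ht.le, by rwa [div_le_iff₀ ht, mul_comm]⟩
    rw [← div_mul_cancel₀ E ht.ne', offloadCost_mul_self]
    exact mul_le_mul_of_nonneg_left (by linarith [hmin _ hEt]) ht.le

end offloadCost

theorem lemma3_subproblem_L1_general (B g0 lam eta Pmax δ : ℝ)
    (hB : 0 < B) (hg0 : 0 < g0) (hlam : 0 ≤ lam)
    (hP : 0 < Pmax) (hδ : 0 < δ) :
    let F : ℝ → ℝ → ℝ := fun E t =>
      E - lam * (t * (B * Real.logb 2 (1 + g0 * E / t))) + eta * t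
    let S : Set (ℝ × ℝ) :=
      {x : ℝ × ℝ | 0 ≤ x.1 ∧ x.1 ≤ x.2 * Pmax ∧ 0 ≤ x.2 ∧ x.2 ≤ δ}
    let pstar : ℝ := min (max (lam * B / Real.log 2 - 1 / g0) 0) Pmax
    let g : ℝ := pstar - lam * (B * Real.logb 2 (1 + g0 * pstar)) + eta
    (g < 0 → (δ * pstar, δ) ∈ S ∧ (∀ x ∈ S, F (δ * pstar) δ ≤ F x.1 x.2) ∧
        F (δ * pstar) δ = δ * g) ∧
    (0 < g → ((0 : ℝ), (0 : ℝ)) ∈ S ∧ (∀ x ∈ S, F 0 0 ≤ F x.1 x.2) ∧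
        F 0 0 = 0) ∧
    (g = 0 → ∀ t ∈ Set.Icc (0 : ℝ) δ, (pstar * t, t) ∈ S ∧
        (∀ x ∈ S, F (pstar * t) t ≤ F x.1 x.2) ∧ F (pstar * t) t = 0) := by
  intro F S pstar g
  have hps : pstar ∈ Icc 0 Pmax := ⟨le_min (le_max_right _ _) hP.le, min_le_right _ _⟩
  have hc : 0 ≤ lam * B / log 2 := div_nonneg (mul_nonneg hlam hB.le) (log_nonneg one_le_two)
  have hmin : ∀ p ∈ Icc 0 Pmax, pstar - lam * (B * logb 2 (1 + g0 * pstar))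
      ≤ p - lam * (B * logb 2 (1 + g0 * p)) := fun p hp => by
    simpa only [mul_logb_two_eq] using
      sub_mul_log_one_add_mul_le hc hg0 hp.1 hps.1 (sub_min_max_mul_sub_nonneg hp)
  have hval (t : ℝ) : F (pstar * t) t = t * g := offloadCost_mul_self pstar t
  have hlow : ∀ x ∈ S, x.2 * g ≤ F x.1 x.2 := fun x hx =>
    mul_le_offloadCost hmin hx.1 hx.2.1 hx.2.2.1
  have hmem : ∀ t ∈ Icc 0 δ, (pstar * t, t) ∈ S := fun t ht =>
    ⟨mul_nonneg hps.1 ht.1, by nlinarith [hps.2, ht.1], ht.1, ht.2⟩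
  have hF00 : F 0 0 = 0 := by simpa using hval 0
  refine ⟨fun hg => ?_, fun hg => ?_, fun hg t ht => ?_⟩
  · rw [mul_comm δ pstar, hval]
    refine ⟨hmem δ ⟨hδ.le, le_rfl⟩, fun x hx => ?_, rfl⟩
    nlinarith [hlow x hx, hx.2.2.2]
  · refine ⟨by simpa using hmem 0 ⟨le_rfl, hδ.le⟩, fun x hx => ?_, hF00⟩
    nlinarith [hlow x hx, hx.2.2.1]
  · rw [hval, hg, mul_zero]
    exact ⟨hmem t ht, fun x hx => by simpa [hg] using hlow x hx, rfl⟩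

/-- (Lemma 3) Closed-form solution of dual subproblem (L1): minimizing `F(E,t) = E − λ̂·t·B·log₂(1 + γ̄₀E/t) + η·t` over `0 ≤ E ≤ t·P_u`, `0 ≤ t ≤ δ` (with `F(0,0) = 0`, which agrees with the formula under Lean's `E/0 = 0` convention). -/
theorem lemma3_subproblem_L1 (B g0 lam eta Pmax δ : ℝ)
    (hB : 0 < B) (hg0 : 0 < g0) (hlam : 0 ≤ lam) (heta : 0 ≤ eta)
    (hP : 0 < Pmax) (hδ : 0 < δ) :
    let F : ℝ → ℝ → ℝ := fun E t =>
      E - lam * (t * (B * Real.logb 2 (1 + g0 * E / t))) + eta * t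
    let S : Set (ℝ × ℝ) :=
      {x : ℝ × ℝ | 0 ≤ x.1 ∧ x.1 ≤ x.2 * Pmax ∧ 0 ≤ x.2 ∧ x.2 ≤ δ}
    let pstar : ℝ := min (max (lam * B / Real.log 2 - 1 / g0) 0) Pmax
    let g : ℝ := pstar - lam * (B * Real.logb 2 (1 + g0 * pstar)) + eta
    (g < 0 → (δ * pstar, δ) ∈ S ∧ (∀ x ∈ S, F (δ * pstar) δ ≤ F x.1 x.2) ∧
        F (δ * pstar) δ = δ * g) ∧
    (0 < g → ((0 : ℝ), (0 : ℝ)) ∈ S ∧ (∀ x ∈ S, F 0 0 ≤ F x.1 x.2) ∧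
        F 0 0 = 0) ∧
    (g = 0 → ∀ t ∈ Set.Icc (0 : ℝ) δ, (pstar * t, t) ∈ S ∧
        (∀ x ∈ S, F (pstar * t) t ≤ F x.1 x.2) ∧ F (pstar * t) t = 0) :=
  lemma3_subproblem_L1_general B g0 lam eta Pmax δ hB hg0 hlam hP hδ
end

section
/- (Lemma 4) Fix real constants B > 0, γ̄₀ > 0, μ ≥ 0, η ≥ 0, P_u > 0 and δ > 0. Consider minimizing F(E, t) = E − μ·t·B·log₂(1 + γ̄₀·E/t) + η·t over the feasible set {(E, t) : 0 ≤ E ≤ t·P_u, 0 ≤ t ≤ δ}, with the convention F(0, 0) = 0. Let p* = min(max(μ·B/ln 2 − 1/γ̄₀, 0), P_u) and g = p* − μ·B·log₂(1 + γ̄₀·p*) + η. Then: (i) if g < 0, the point (E, t) = (δ·p*, δ) is a global minimizer, with minimum value δ·g; (ii) if g > 0, the point (0, 0) is a global minimizer, with minimum value 0; (iii) if g = 0, then for every t ∈ [0, δ] the point (p*·t, t) is a global minimizer, with minimum value 0. -/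
/-! The objective is the perspective `F(E, t) = t · (φ(E/t) + η)` of the convex per-unit-time cost
`φ(p) = p - c · log (1 + γ̄₀ p)`, `c = μB / ln 2`. Concavity of `log` gives the tangent bound
`φ(p) - φ(q) ≥ (p - q) · γ̄₀ (q - (c - 1/γ̄₀)) / (1 + γ̄₀ q)`, and for `q = p*`, the projection of the
stationary point `c - 1/γ̄₀` onto `[0, P_u]`, the right-hand side is nonnegative on `[0, P_u]`.
Hence `F(E, t) ≥ t · g` on the feasible set, with equality along the ray `E = p* t`, and the
three cases follow from the sign of `g`. -/

open Real Set

lemma log_sub_log_le_sub_div {a b : ℝ} (ha : 0 < a) (hb : 0 < b) :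
    log a - log b ≤ (a - b) / b := by
  have h := log_le_sub_one_of_pos (div_pos ha hb)
  rwa [log_div ha.ne' hb.ne', div_sub_one hb.ne'] at h

lemma sub_mul_sub_min_max_nonneg {w P p : ℝ} (hp0 : 0 ≤ p) (hpP : p ≤ P) :
    0 ≤ (p - min (max w 0) P) * (min (max w 0) P - w) := by
  rcases le_total w 0 with hw0 | hw0
  · rw [max_eq_right hw0, min_eq_left (hp0.trans hpP)]
    nlinarith
  rcases le_total w P with hwP | hwP
  · rw [max_eq_left hw0, min_eq_left hwP]
    simp
  · rw [max_eq_left hw0, min_eq_right hwP]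
    nlinarith

lemma isMinOn_sub_mul_log_one_add_mul {c γ P : ℝ} (hc : 0 ≤ c) (hγ : 0 < γ) :
    IsMinOn (fun p => p - c * log (1 + γ * p)) (Icc 0 P) (min (max (c - 1 / γ) 0) P) := by
  rw [isMinOn_iff]
  rintro p ⟨hp0, hpP⟩
  set q := min (max (c - 1 / γ) 0) P
  have hq0 : 0 ≤ q := le_min (le_max_right _ _) (hp0.trans hpP)
  have hq : 0 < 1 + γ * q := by positivity
  have tangent : c * (log (1 + γ * p) - log (1 + γ * q)) ≤ c * (γ * (p - q) / (1 + γ * q)) := by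
    have h := log_sub_log_le_sub_div (by positivity : 0 < 1 + γ * p) hq
    rw [add_sub_add_left_eq_sub, ← mul_sub] at h
    exact mul_le_mul_of_nonneg_left h hc
  have factor : (p - q) - c * (γ * (p - q) / (1 + γ * q))
      = γ * ((p - q) * (q - (c - 1 / γ))) / (1 + γ * q) := by
    field_simp
    ring
  have hproj : 0 ≤ γ * ((p - q) * (q - (c - 1 / γ))) / (1 + γ * q) :=
    div_nonneg (mul_nonneg hγ.le (sub_mul_sub_min_max_nonneg hp0 hpP)) hq.le
  show q - c * log (1 + γ * q) ≤ p - c * log (1 + γ * p)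
  linarith

lemma objective_mul_eq (lam B g0 eta p t : ℝ) :
    t * p - lam * (t * (B * logb 2 (1 + g0 * (t * p) / t))) + eta * t
      = t * (p - lam * (B * logb 2 (1 + g0 * p)) + eta) := by
  rcases eq_or_ne t 0 with rfl | ht
  · simp
  rw [mul_div_assoc, mul_div_cancel_left₀ p ht]
  ring

lemma mul_le_objective {lam B g0 eta Pmax q E t : ℝ}
    (hq : ∀ p ∈ Icc 0 Pmax, q ≤ p - lam * (B * logb 2 (1 + g0 * p)))
    (hE0 : 0 ≤ E) (hEP : E ≤ t * Pmax) (ht : 0 ≤ t) :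
    t * (q + eta) ≤ E - lam * (t * (B * logb 2 (1 + g0 * E / t))) + eta * t := by
  rcases ht.eq_or_lt with rfl | ht
  · simp [le_antisymm (by simpa using hEP) hE0]
  have hE : E = t * (E / t) := (mul_div_cancel₀ E ht.ne').symm
  have hp : E / t ∈ Icc 0 Pmax := ⟨div_nonneg hE0 ht.le, (div_le_iff₀' ht).2 hEP⟩
  rw [hE, objective_mul_eq]
  gcongr
  exact hq _ hp

theorem lemma4_subproblem_L2_general (B g0 lam eta Pmax δ : ℝ)
    (hB : 0 < B) (hg0 : 0 < g0) (hlam : 0 ≤ lam)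
    (hP : 0 < Pmax) (hδ : 0 < δ) :
    let F : ℝ → ℝ → ℝ := fun E t =>
      E - lam * (t * (B * Real.logb 2 (1 + g0 * E / t))) + eta * t
    let S : Set (ℝ × ℝ) :=
      {x : ℝ × ℝ | 0 ≤ x.1 ∧ x.1 ≤ x.2 * Pmax ∧ 0 ≤ x.2 ∧ x.2 ≤ δ}
    let pstar : ℝ := min (max (lam * B / Real.log 2 - 1 / g0) 0) Pmax
    let g : ℝ := pstar - lam * (B * Real.logb 2 (1 + g0 * pstar)) + eta
    (g < 0 → (δ * pstar, δ) ∈ S ∧ (∀ x ∈ S, F (δ * pstar) δ ≤ F x.1 x.2) ∧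
        F (δ * pstar) δ = δ * g) ∧
    (0 < g → ((0 : ℝ), (0 : ℝ)) ∈ S ∧ (∀ x ∈ S, F 0 0 ≤ F x.1 x.2) ∧
        F 0 0 = 0) ∧
    (g = 0 → ∀ t ∈ Set.Icc (0 : ℝ) δ, (pstar * t, t) ∈ S ∧
        (∀ x ∈ S, F (pstar * t) t ≤ F x.1 x.2) ∧ F (pstar * t) t = 0) := by
  intro F S pstar g
  have hmin : ∀ p ∈ Icc 0 Pmax, pstar - lam * (B * logb 2 (1 + g0 * pstar))
      ≤ p - lam * (B * logb 2 (1 + g0 * p)) := by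
    simpa only [mul_logb_two_eq, isMinOn_iff] using
      isMinOn_sub_mul_log_one_add_mul (P := Pmax) (by positivity : 0 ≤ lam * B / log 2) hg0
  have hlb : ∀ x ∈ S, x.2 * g ≤ F x.1 x.2 := fun x hx =>
    mul_le_objective hmin hx.1 hx.2.1 hx.2.2.1
  have hval : ∀ t, F (pstar * t) t = t * g := fun t => by
    simpa only [mul_comm t pstar] using objective_mul_eq lam B g0 eta pstar t
  have hmem : ∀ t ∈ Icc 0 δ, (pstar * t, t) ∈ S := fun t ht =>
    ⟨mul_nonneg (le_min (le_max_right _ _) hP.le) ht.1,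
      by rw [mul_comm]; exact mul_le_mul_of_nonneg_left (min_le_right _ _) ht.1, ht.1, ht.2⟩
  refine ⟨fun hg => ?_, fun hg => ?_, fun hg t ht => ?_⟩
  · rw [mul_comm δ, hval]
    exact ⟨hmem δ ⟨hδ.le, le_rfl⟩,
      fun x hx => (mul_le_mul_of_nonpos_right hx.2.2.2 hg.le).trans (hlb x hx), rfl⟩
  · have hF0 : F 0 0 = 0 := by simpa using hval 0
    refine ⟨by simpa using hmem 0 ⟨le_rfl, hδ.le⟩, fun x hx => ?_, hF0⟩
    rw [hF0]
    exact (mul_nonneg hx.2.2.1 hg.le).trans (hlb x hx)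
  · rw [hval, hg, mul_zero]
    exact ⟨hmem t ht, fun x hx => by simpa [hg] using hlb x hx, rfl⟩

/-- (Lemma 4) Closed-form solution of dual subproblem (L2): minimizing `F(E,t) = E − μ·t·B·log₂(1 + γ̄₀E/t) + η·t` over `0 ≤ E ≤ t·P_u`, `0 ≤ t ≤ δ` (with `F(0,0) = 0`, which agrees with the formula under Lean's `E/0 = 0` convention). -/
theorem lemma4_subproblem_L2 (B g0 lam eta Pmax δ : ℝ)
    (hB : 0 < B) (hg0 : 0 < g0) (hlam : 0 ≤ lam) (heta : 0 ≤ eta)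
    (hP : 0 < Pmax) (hδ : 0 < δ) :
    let F : ℝ → ℝ → ℝ := fun E t =>
      E - lam * (t * (B * Real.logb 2 (1 + g0 * E / t))) + eta * t
    let S : Set (ℝ × ℝ) :=
      {x : ℝ × ℝ | 0 ≤ x.1 ∧ x.1 ≤ x.2 * Pmax ∧ 0 ≤ x.2 ∧ x.2 ≤ δ}
    let pstar : ℝ := min (max (lam * B / Real.log 2 - 1 / g0) 0) Pmax
    let g : ℝ := pstar - lam * (B * Real.logb 2 (1 + g0 * pstar)) + eta
    (g < 0 → (δ * pstar, δ) ∈ S ∧ (∀ x ∈ S, F (δ * pstar) δ ≤ F x.1 x.2) ∧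
        F (δ * pstar) δ = δ * g) ∧
    (0 < g → ((0 : ℝ), (0 : ℝ)) ∈ S ∧ (∀ x ∈ S, F 0 0 ≤ F x.1 x.2) ∧
        F 0 0 = 0) ∧
    (g = 0 → ∀ t ∈ Set.Icc (0 : ℝ) δ, (pstar * t, t) ∈ S ∧
        (∀ x ∈ S, F (pstar * t) t ≤ F x.1 x.2) ∧ F (pstar * t) t = 0) :=
  lemma4_subproblem_L2_general B g0 lam eta Pmax δ hB hg0 hlam hP hδ
end

section
/- (Lemma 5) Fix real constants B > 0, γ̄₁ > 0, ν ≥ 0, η ≥ 0, P_h > 0 and δ > 0. Consider minimizing F(E, t) = E − ν·t·B·log₂(1 + γ̄₁·E/t) + η·t over the feasible set {(E, t) : 0 ≤ E ≤ t·P_h, 0 ≤ t ≤ δ}, with the convention F(0, 0) = 0. Let p* = min(max(ν·B/ln 2 − 1/γ̄₁, 0), P_h) and g = p* − ν·B·log₂(1 + γ̄₁·p*) + η. Then: (i) if g < 0, the point (E, t) = (δ·p*, δ) is a global minimizer, with minimum value δ·g; (ii) if g > 0, the point (0, 0) is a global minimizer, with minimum value 0; (iii) if g = 0, then for every t ∈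 [0, δ] the point (p*·t, t) is a global minimizer, with minimum value 0. -/
/-!
Writing a feasible point as `(t * p, t)` with `p ∈ [0, P_h]`, the objective becomes the perspective
`t * (φ p + η)` of the per-unit-time cost `φ p = p - c * log (1 + γ̄₁ p)`, `c = ν B / ln 2`.
Since `φ` is convex, `p*` (the stationary point `c - 1/γ̄₁` clamped to `[0, P_h]`) minimizes it on
`[0, P_h]`, so the objective is at least `t * g` on the feasible set, with equality along the ray
`(t * p*, t)`. The sign of `g` then decides whether the optimal `t` is `δ`, `0`, or arbitrary.
-/

open Set Real

theorem sub_clamp_mul_clamp_sub_nonneg {a b s p : ℝ} (hp : p ∈ Icc a b) :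
    0 ≤ (p - min (max s a) b) * (min (max s a) b - s) := by
  obtain ⟨hap, hpb⟩ := hp
  rcases le_total s a with hsa | has
  · rw [max_eq_right hsa, min_eq_left (hap.trans hpb)]
    exact mul_nonneg (sub_nonneg.2 hap) (sub_nonneg.2 hsa)
  · rw [max_eq_left has]
    rcases le_total s b with hsb | hbs
    · simp [min_eq_left hsb]
    · rw [min_eq_right hbs]
      exact mul_nonneg_of_nonpos_of_nonpos (sub_nonpos.2 hpb) (sub_nonpos.2 hbs)

theorem log_sub_log_le_sub_div_s7 {u v : ℝ} (hu : 0 < u) (hv : 0 < v) :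
    log u - log v ≤ (u - v) / v := by
  rw [← log_div hu.ne' hv.ne', sub_div, div_self hv.ne']
  exact log_le_sub_one_of_pos (div_pos hu hv)

theorem clamp_sub_mul_log_le {c γ P p : ℝ} (hc : 0 ≤ c) (hγ : 0 < γ) (hp : p ∈ Icc 0 P) :
    min (max (c - 1 / γ) 0) P - c * log (1 + γ * min (max (c - 1 / γ) 0) P) ≤
      p - c * log (1 + γ * p) := by
  have hclamp := mul_nonneg hγ.le (sub_clamp_mul_clamp_sub_nonneg (s := c - 1 / γ) hp)
  set q := min (max (c - 1 / γ) 0) P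
  have hq : 0 ≤ q := le_min (le_max_right _ _) (hp.1.trans hp.2)
  have hpos : ∀ x, 0 ≤ x → 0 < 1 + γ * x := fun x hx => by positivity
  have htangent := mul_le_mul_of_nonneg_left
    (log_sub_log_le_sub_div_s7 (hpos p hp.1) (hpos q hq)) hc
  -- `1 + γ q - c γ = γ (q - (c - 1/γ))`: the first-order optimality condition at the clamp `q`
  have hfirst_order : 0 ≤ (p - q) * (1 + γ * q - c * γ) := by
    linear_combination hclamp + (p - q) * mul_one_div_cancel hγ.ne'
  have hslope : c * ((1 + γ * p - (1 + γ * q)) / (1 + γ * q)) ≤ p - q := by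
    rw [← mul_div_assoc, div_le_iff₀ (hpos q hq)]
    linarith
  linarith

theorem perspective_eq (r : ℝ → ℝ) (lam γ eta t p : ℝ) :
    t * p - lam * (t * r (γ * (t * p) / t)) + eta * t = t * (p - lam * r (γ * p) + eta) := by
  rcases eq_or_ne t 0 with rfl | ht
  · simp
  · rw [mul_left_comm, mul_div_assoc, mul_div_cancel_left₀ p ht]
    ring

theorem exists_eq_mul_mem_Icc {E t P : ℝ} (hP : 0 ≤ P) (hE : 0 ≤ E) (hEt : E ≤ t * P)
    (ht : 0 ≤ t) : ∃ p ∈ Icc 0 P, E = t * p := by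
  rcases ht.eq_or_lt with rfl | ht
  · exact ⟨0, ⟨le_rfl, hP⟩, by linarith⟩
  · refine ⟨E / t, ⟨div_nonneg hE ht.le, (div_le_iff₀ ht).2 (by linarith)⟩, ?_⟩
    field_simp

theorem lemma5_subproblem_L3_general (B g0 lam eta Pmax δ : ℝ)
    (hB : 0 < B) (hg0 : 0 < g0) (hlam : 0 ≤ lam)
    (hP : 0 < Pmax) (hδ : 0 < δ) :
    let F : ℝ → ℝ → ℝ := fun E t =>
      E - lam * (t * (B * Real.logb 2 (1 + g0 * E / t))) + eta * t
    let S : Set (ℝ × ℝ) :=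
      {x : ℝ × ℝ | 0 ≤ x.1 ∧ x.1 ≤ x.2 * Pmax ∧ 0 ≤ x.2 ∧ x.2 ≤ δ}
    let pstar : ℝ := min (max (lam * B / Real.log 2 - 1 / g0) 0) Pmax
    let g : ℝ := pstar - lam * (B * Real.logb 2 (1 + g0 * pstar)) + eta
    (g < 0 → (δ * pstar, δ) ∈ S ∧ (∀ x ∈ S, F (δ * pstar) δ ≤ F x.1 x.2) ∧
        F (δ * pstar) δ = δ * g) ∧
    (0 < g → ((0 : ℝ), (0 : ℝ)) ∈ S ∧ (∀ x ∈ S, F 0 0 ≤ F x.1 x.2) ∧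
        F 0 0 = 0) ∧
    (g = 0 → ∀ t ∈ Set.Icc (0 : ℝ) δ, (pstar * t, t) ∈ S ∧
        (∀ x ∈ S, F (pstar * t) t ≤ F x.1 x.2) ∧ F (pstar * t) t = 0) := by
  intro F S pstar g
  have hF : ∀ t p, F (t * p) t = t * (p - lam * (B * logb 2 (1 + g0 * p)) + eta) :=
    fun t p => perspective_eq (fun x => B * logb 2 (1 + x)) lam g0 eta t p
  have hlogb : ∀ x, lam * (B * logb 2 x) = lam * B / log 2 * log x := fun x => by
    rw [logb]; ring
  have hpstar : pstar ∈ Icc 0 Pmax := ⟨le_min (le_max_right _ _) hP.le, min_le_right _ _⟩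
  have hmem : ∀ t ∈ Icc 0 δ, (t * pstar, t) ∈ S := fun t ht =>
    ⟨mul_nonneg ht.1 hpstar.1, by nlinarith [ht.1, hpstar.2], ht.1, ht.2⟩
  have hlower : ∀ x ∈ S, x.2 * g ≤ F x.1 x.2 := by
    rintro ⟨E, t⟩ ⟨hE, hEt, ht, -⟩
    obtain ⟨p, hp, rfl⟩ := exists_eq_mul_mem_Icc (E := E) (t := t) hP.le hE hEt ht
    rw [hF]
    refine mul_le_mul_of_nonneg_left ?_ ht
    have := clamp_sub_mul_log_le
      (div_nonneg (mul_nonneg hlam hB.le) (log_pos one_lt_two).le) hg0 hp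
    simp only [g, hlogb]
    linarith
  have hFg : ∀ t, F (t * pstar) t = t * g := fun t => hF t pstar
  have hF₀ : F 0 0 = 0 := by simpa using hF 0 0
  refine ⟨fun hg => ⟨hmem δ ⟨hδ.le, le_rfl⟩, fun x hx => ?_, hFg δ⟩,
    fun hg => ⟨⟨le_rfl, by simp, le_rfl, hδ.le⟩, fun x hx => ?_, hF₀⟩, fun hg t ht => ?_⟩
  · rw [hFg]
    nlinarith [hlower x hx, hx.2.2.2]
  · rw [hF₀]
    nlinarith [hlower x hx, hx.2.2.1]
  · rw [mul_comm, hFg, hg, mul_zero]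
    exact ⟨hmem t ht, fun x hx => by simpa [hg] using hlower x hx, rfl⟩

/-- (Lemma 5) Closed-form solution of dual subproblem (L3): minimizing `F(E,t) = E − ν·t·B·log₂(1 + γ̄₁E/t) + η·t` over `0 ≤ E ≤ t·P_h`, `0 ≤ t ≤ δ` (with `F(0,0) = 0`, which agrees with the formula under Lean's `E/0 = 0` convention). -/
theorem lemma5_subproblem_L3 (B g0 lam eta Pmax δ : ℝ)
    (hB : 0 < B) (hg0 : 0 < g0) (hlam : 0 ≤ lam) (heta : 0 ≤ eta)
    (hP : 0 < Pmax) (hδ : 0 < δ) :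
    let F : ℝ → ℝ → ℝ := fun E t =>
      E - lam * (t * (B * Real.logb 2 (1 + g0 * E / t))) + eta * t
    let S : Set (ℝ × ℝ) :=
      {x : ℝ × ℝ | 0 ≤ x.1 ∧ x.1 ≤ x.2 * Pmax ∧ 0 ≤ x.2 ∧ x.2 ≤ δ}
    let pstar : ℝ := min (max (lam * B / Real.log 2 - 1 / g0) 0) Pmax
    let g : ℝ := pstar - lam * (B * Real.logb 2 (1 + g0 * pstar)) + eta
    (g < 0 → (δ * pstar, δ) ∈ S ∧ (∀ x ∈ S, F (δ * pstar) δ ≤ F x.1 x.2) ∧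
        F (δ * pstar) δ = δ * g) ∧
    (0 < g → ((0 : ℝ), (0 : ℝ)) ∈ S ∧ (∀ x ∈ S, F 0 0 ≤ F x.1 x.2) ∧
        F 0 0 = 0) ∧
    (g = 0 → ∀ t ∈ Set.Icc (0 : ℝ) δ, (pstar * t, t) ∈ S ∧
        (∀ x ∈ S, F (pstar * t) t ≤ F x.1 x.2) ∧ F (pstar * t) t = 0) :=
  lemma5_subproblem_L3_general B g0 lam eta Pmax δ hB hg0 hlam hP hδ
end

section
/- Let v₀ > 0 and let u > 0 and v be real numbers. Then u² ≥ √(1 + v⁴/(4·v₀⁴)) − v²/(2·v₀²) if and only if 1/u² ≤ u² + v²/v₀². -/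
/-! With `a = v²/(2v₀²)` and `w = u² > 0`, both constraints say `(w + 2a) w ≥ 1`: the first after
squaring `√(1 + a²) ≤ w + a`, the second after multiplying by `w`. -/

theorem Real.sqrt_one_add_sq_sub_le_iff {a w : ℝ} (hw : 0 < w) :
    √(1 + a ^ 2) - a ≤ w ↔ 1 / w ≤ w + 2 * a := by
  have hsq : 1 + a ^ 2 ≤ (w + a) ^ 2 ↔ 1 ≤ (w + 2 * a) * w := by
    constructor <;> intro h <;> linarith
  rw [sub_le_iff_le_add', Real.sqrt_le_iff, add_comm a w, hsq, div_le_iff₀ hw]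
  refine ⟨And.right, fun h => ⟨?_, h⟩⟩
  -- the squaring is reversible: `w + a` is the mean of `w > 0` and `w + 2a > 0`
  have h2a : 0 < w + 2 * a := pos_of_mul_pos_left (one_pos.trans_le h) hw.le
  linarith

theorem slack_constraint_equiv_general (v₀ u v : ℝ) (hu : 0 < u) :
    Real.sqrt (1 + v ^ 4 / (4 * v₀ ^ 4)) - v ^ 2 / (2 * v₀ ^ 2) ≤ u ^ 2 ↔
      1 / u ^ 2 ≤ u ^ 2 + v ^ 2 / v₀ ^ 2 := by
  have hquartic : v ^ 4 / (4 * v₀ ^ 4) = (v ^ 2 / (2 * v₀ ^ 2)) ^ 2 := by ring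
  have hsquare : v ^ 2 / v₀ ^ 2 = 2 * (v ^ 2 / (2 * v₀ ^ 2)) := by ring
  rw [hquartic, hsquare]
  exact Real.sqrt_one_add_sq_sub_le_iff (pow_pos hu 2)

/-- For `v₀ > 0` and `u > 0`, the slack constraint
`u² ≥ √(1 + v⁴/(4v₀⁴)) − v²/(2v₀²)` is equivalent to `1/u² ≤ u² + v²/v₀²`. -/
theorem slack_constraint_equiv (v₀ u v : ℝ) (hv₀ : 0 < v₀) (hu : 0 < u) :
    Real.sqrt (1 + v ^ 4 / (4 * v₀ ^ 4)) - v ^ 2 / (2 * v₀ ^ 2) ≤ u ^ 2 ↔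
      1 / u ^ 2 ≤ u ^ 2 + v ^ 2 / v₀ ^ 2 :=
  slack_constraint_equiv_general v₀ u v hu
end

section
/- Let a > 0 and H > 0 be real constants, and let w, q, q_j ∈ ℝ². Then log₂(1 + a/(‖q − w‖² + H²)) ≥ log₂(1 + a/(‖q_j − w‖² + H²)) − (log₂ e) · a · (‖q − w‖² − ‖q_j − w‖²) / ((‖q_j − w‖² + H²) · (‖q_j − w‖² + H² + a)). -/
/-!
The map `z ↦ log (1 + a / z)` is convex on `z > 0`, so it lies above its tangent line at `v`.
Concretely, `log x ≥ 1 - x⁻¹` applied to `x = (1 + a/u) / (1 + a/v)` gives the slope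
`a (v - u) / ((u + a) v)`, which dominates the tangent slope `a (v - u) / (v (v + a))`
because the two differ by `a (u - v)² / (v (u + a) (v + a)) ≥ 0`.
-/

open Real

lemma log_one_add_div_tangent_le {a u v : ℝ} (ha : 0 ≤ a) (hu : 0 < u) (hv : 0 < v) :
    log (1 + a / v) - a * (u - v) / (v * (v + a)) ≤ log (1 + a / u) := by
  have hratio : (1 + a / v) / (1 + a / u) = (v + a) * u / ((u + a) * v) := by
    field_simp
  have hchord : 1 - ((1 + a / u) / (1 + a / v))⁻¹ ≤ log ((1 + a / u) / (1 + a / v)) :=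
    one_sub_inv_le_log_of_pos (by positivity)
  rw [inv_div, hratio, log_div (by positivity) (by positivity)] at hchord
  have hslope : -(a * (u - v) / (v * (v + a))) ≤ 1 - (v + a) * u / ((u + a) * v) := by
    have hgap : 1 - (v + a) * u / ((u + a) * v) + a * (u - v) / (v * (v + a)) =
        a * (u - v) ^ 2 / (v * (u + a) * (v + a)) := by
      field_simp
      ring
    have : 0 ≤ a * (u - v) ^ 2 / (v * (u + a) * (v + a)) := by positivity
    linarith
  linarith

lemma logb_one_add_div_tangent_le {b a u v : ℝ} (hb : 1 < b) (ha : 0 ≤ a) (hu : 0 < u)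
    (hv : 0 < v) :
    logb b (1 + a / v) - logb b (exp 1) * a * (u - v) / (v * (v + a)) ≤ logb b (1 + a / u) := by
  simp only [logb, log_exp]
  calc log (1 + a / v) / log b - 1 / log b * a * (u - v) / (v * (v + a))
      _ = (log (1 + a / v) - a * (u - v) / (v * (v + a))) / log b := by ring
      _ ≤ log (1 + a / u) / log b :=
        div_le_div_of_nonneg_right (log_one_add_div_tangent_le ha hu hv) (log_pos hb).le

/-- The SCA global lower bound (equations (32)–(34)): for `a > 0`, `H > 0`,
`log₂(1 + a/(‖q − w‖² + H²))` is lower-bounded by its first-order Taylor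
expansion in the squared distance at the local point `q_j`. -/
theorem sca_rate_lower_bound (a H : ℝ) (ha : 0 < a) (hH : 0 < H)
    (q qj w : EuclideanSpace ℝ (Fin 2)) :
    Real.logb 2 (1 + a / (‖qj - w‖ ^ 2 + H ^ 2)) -
        Real.logb 2 (Real.exp 1) * a * (‖q - w‖ ^ 2 - ‖qj - w‖ ^ 2) /
          ((‖qj - w‖ ^ 2 + H ^ 2) * (‖qj - w‖ ^ 2 + H ^ 2 + a)) ≤
      Real.logb 2 (1 + a / (‖q - w‖ ^ 2 + H ^ 2)) := by
  have h := logb_one_add_div_tangent_le one_lt_two ha.le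
    (u := ‖q - w‖ ^ 2 + H ^ 2) (v := ‖qj - w‖ ^ 2 + H ^ 2) (by positivity) (by positivity)
  rwa [add_sub_add_right_eq_sub] at h
end
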